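/- Let y₁, y₂ ∈ ℝ with (y₁,y₂) ≠ (0,0), and let u, v ∈ [-1,1] be such that y₁² + y₂² + u(y₁² - y₂²) > 0. Define a = √((y₁² + y₂² + u(y₁² - y₂²))/2), b = √((y₁² - y₂²)²(1-u²) + 4y₁²y₂²(1-v²)) / (y₁² + y₂² + u(y₁² - y₂²)), and c = 2v y₁ y₂ / (y₁² + y₂² + u(y₁² - y₂²)). Then for all x₁, x₂ ∈ ℝ: (x₁² + x₂²)(y₁² + y₂²) + u(x₁² - x₂²)(y₁² - y₂²) + 4 v x₁ x₂ y₁ y₂ = 2 a² ((x₁ + c x₂)² + b² x₂²). -/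
import Mathlib

theorem stmt4 (y₁ y₂ u v : ℝ) (hy : (y₁, y₂) ≠ (0, 0))
    (hu : u ∈ Set.Icc (-1 : ℝ) 1) (hv : v ∈ Set.Icc (-1 : ℝ) 1)
    (hden : 0 < y₁ ^ 2 + y₂ ^ 2 + u * (y₁ ^ 2 - y₂ ^ 2)) :
    ∀ x₁ x₂ : ℝ,
      (x₁ ^ 2 + x₂ ^ 2) * (y₁ ^ 2 + y₂ ^ 2) + u * (x₁ ^ 2 - x₂ ^ 2) * (y₁ ^ 2 - y₂ ^ 2)
          + 4 * v * x₁ * x₂ * y₁ * y₂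
        = 2 * Real.sqrt ((y₁ ^ 2 + y₂ ^ 2 + u * (y₁ ^ 2 - y₂ ^ 2)) / 2) ^ 2 *
            ((x₁ + (2 * v * y₁ * y₂ / (y₁ ^ 2 + y₂ ^ 2 + u * (y₁ ^ 2 - y₂ ^ 2))) * x₂) ^ 2 +
              (Real.sqrt ((y₁ ^ 2 - y₂ ^ 2) ^ 2 * (1 - u ^ 2) + 4 * y₁ ^ 2 * y₂ ^ 2 * (1 - v ^ 2)) /
                  (y₁ ^ 2 + y₂ ^ 2 + u * (y₁ ^ 2 - y₂ ^ 2))) ^ 2 * x₂ ^ 2) := by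
  intro x₁ x₂
  obtain ⟨hu1, hu2⟩ := hu
  obtain ⟨hv1, hv2⟩ := hv
  have h1 : Real.sqrt ((y₁ ^ 2 + y₂ ^ 2 + u * (y₁ ^ 2 - y₂ ^ 2)) / 2) ^ 2
      = (y₁ ^ 2 + y₂ ^ 2 + u * (y₁ ^ 2 - y₂ ^ 2)) / 2 :=
    Real.sq_sqrt (by linarith)
  have h2 : Real.sqrt ((y₁ ^ 2 - y₂ ^ 2) ^ 2 * (1 - u ^ 2) + 4 * y₁ ^ 2 * y₂ ^ 2 * (1 - v ^ 2)) ^ 2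
      = (y₁ ^ 2 - y₂ ^ 2) ^ 2 * (1 - u ^ 2) + 4 * y₁ ^ 2 * y₂ ^ 2 * (1 - v ^ 2) := by
    apply Real.sq_sqrt
    have : 0 ≤ 1 - u ^ 2 := by nlinarith
    have : 0 ≤ 1 - v ^ 2 := by nlinarith
    positivity
  rw [h1, div_pow, h2]
  have hd : y₁ ^ 2 + y₂ ^ 2 + u * (y₁ ^ 2 - y₂ ^ 2) ≠ 0 := ne_of_gt hden
  field_simp
  ring
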